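/- arXiv:2405.11626 — 2 statements merged into one kernel-verified Lean document; each statement's English description precedes it below -/
import Mathlib

section
/- For two absolutely continuous probability measures μ and ν on ℝ with finite second moments, the squared 2-Wasserstein distance equals the integral over t ∈ (0,1) of (F_μ^{-1}(t) - F_ν^{-1}(t))², where F_μ^{-1} and F_ν^{-1} are the quantile functions of μ and ν. -/
open MeasureTheory ProbabilityTheory
open scoped ENNReal

/-- Quantile (generalized inverse of the CDF) of a measure on ℝ. -/
noncomputable def quantile (μ : Measure ℝ) (t : ℝ) : ℝ := sInf {x | t ≤ cdf μ x}

/-- Squared 2-Wasserstein distance, as infimum over couplings. -/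
noncomputable def W2sq (μ ν : Measure ℝ) : ℝ≥0∞ :=
  ⨅ γ ∈ {γ : Measure (ℝ × ℝ) |
      γ.map Prod.fst = μ ∧ γ.map Prod.snd = ν},
    ∫⁻ p : ℝ × ℝ, ENNReal.ofReal ((p.1 - p.2) ^ 2) ∂γ

/-!
The quantile coupling `(Q_μ, Q_ν)_* Leb|(0,1)` has marginals `μ` and `ν`, because
`Q_μ u ≤ x ↔ u ≤ F_μ x`. For any coupling `γ`, `(x - y)⁺² / 2` is the area of the triangle
`{(s, t) | y ≤ s < t < x}`, so by Tonelli `∫ (x - y)⁺² dγ = 2 ∫_{s < t} γ {y ≤ s, t < x} ds dt`,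
and likewise for `(y - x)⁺²` after swapping the coordinates. Each layer `γ {y ≤ s, t < x}` is at
least `F_ν s - F_μ t`, and the quantile coupling attains this bound because under it the events
`{y ≤ s}` and `{x ≤ t}` are the nested intervals `(0, F_ν s]` and `(0, F_μ t]`. So the quantile
coupling is optimal, and its cost is `∫₀¹ (Q_μ - Q_ν)²`, finite by the second moment assumptions.
-/

open Set

section quantile

variable (μ : Measure ℝ)

lemma bddBelow_setOf_le_cdf {u : ℝ} (hu : 0 < u) : BddBelow {x | u ≤ cdf μ x} := by
  obtain ⟨z, hz⟩ := ((tendsto_cdf_atBot μ).eventually (eventually_lt_nhds hu)).exists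
  exact ⟨z, fun y hy => le_of_not_gt fun hyz => (hy.trans (monotone_cdf μ hyz.le)).not_gt hz⟩

lemma nonempty_setOf_le_cdf {u : ℝ} (hu : u < 1) : {x | u ≤ cdf μ x}.Nonempty :=
  ((tendsto_cdf_atTop μ).eventually (eventually_ge_nhds hu)).exists

lemma quantile_le_iff {u : ℝ} (hu : u ∈ Ioo 0 1) (x : ℝ) :
    quantile μ u ≤ x ↔ u ≤ cdf μ x := by
  refine ⟨fun h => ?_, fun h => csInf_le (bddBelow_setOf_le_cdf μ hu.1) h⟩
  have h_right : ∀ y > x, u ≤ cdf μ y := fun y hy => by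
    obtain ⟨z, hz, hzy⟩ := exists_lt_of_csInf_lt (nonempty_setOf_le_cdf μ hu.2) (h.trans_lt hy)
    exact hz.trans (monotone_cdf μ hzy.le)
  exact ge_of_tendsto ((cdf μ).right_continuous x |>.mono Ioi_subset_Ici_self).tendsto
    (eventually_nhdsWithin_of_forall h_right)

lemma monotoneOn_quantile : MonotoneOn (quantile μ) (Ioo 0 1) := fun _ hu _ hv huv =>
  csInf_le_csInf (bddBelow_setOf_le_cdf μ hu.1) (nonempty_setOf_le_cdf μ hv.2)
    fun _ hx => huv.trans hx

lemma aemeasurable_quantile : AEMeasurable (quantile μ) (volume.restrict (Ioo 0 1)) :=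
  aemeasurable_restrict_of_monotoneOn measurableSet_Ioo (monotoneOn_quantile μ)

lemma volume_quantile_le_inter_Ioo [IsProbabilityMeasure μ] (x : ℝ) :
    volume ({u | quantile μ u ≤ x} ∩ Ioo 0 1) = ENNReal.ofReal (cdf μ x) := by
  have h_eq : {u | quantile μ u ≤ x} ∩ Ioo 0 1 = {u | u ≤ cdf μ x} ∩ Ioo 0 1 := by
    ext u
    exact and_congr_left fun hu => quantile_le_iff μ hu x
  rw [h_eq]
  refine le_antisymm ?_ ?_
  · calc volume ({u | u ≤ cdf μ x} ∩ Ioo 0 1) ≤ volume (Ioc 0 (cdf μ x)) :=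
          measure_mono fun u hu => ⟨hu.2.1, hu.1⟩
      _ = _ := by rw [Real.volume_Ioc, sub_zero]
  · calc ENNReal.ofReal (cdf μ x) = volume (Ioo 0 (cdf μ x)) := by rw [Real.volume_Ioo, sub_zero]
      _ ≤ volume ({u | u ≤ cdf μ x} ∩ Ioo 0 1) := measure_mono fun u hu =>
          ⟨hu.2.le, hu.1, hu.2.trans_le (cdf_le_one μ x)⟩

lemma map_quantile [IsProbabilityMeasure μ] :
    (volume.restrict (Ioo 0 1)).map (quantile μ) = μ := by
  refine Measure.ext_of_Iic _ _ fun x => ?_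
  rw [Measure.map_apply_of_aemeasurable (aemeasurable_quantile μ) measurableSet_Iic,
    Measure.restrict_apply' measurableSet_Ioo, ← ofReal_cdf]
  exact volume_quantile_le_inter_Ioo μ x

lemma memLp_quantile [IsProbabilityMeasure μ] (hμ2 : Integrable (fun x : ℝ => x ^ 2) μ) :
    MemLp (quantile μ) 2 (volume.restrict (Ioo 0 1)) := by
  have h : MemLp id 2 μ := (memLp_two_iff_integrable_sq aestronglyMeasurable_id).2 hμ2
  rw [← map_quantile μ] at h
  exact h.comp_of_map (aemeasurable_quantile μ)

end quantile

lemma measurableSet_snd_le_and_lt_fst (s t : ℝ) :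
    MeasurableSet {p : ℝ × ℝ | p.2 ≤ s ∧ t < p.1} :=
  (measurableSet_le measurable_snd measurable_const).inter
    (measurableSet_lt measurable_const measurable_fst)

lemma map_snd_Iic_sub_map_fst_Iic_le (γ : Measure (ℝ × ℝ)) (s t : ℝ) :
    γ.map Prod.snd (Iic s) - γ.map Prod.fst (Iic t) ≤ γ {p | p.2 ≤ s ∧ t < p.1} := by
  rw [Measure.map_apply measurable_snd measurableSet_Iic,
    Measure.map_apply measurable_fst measurableSet_Iic]
  exact le_measure_sdiff.trans (measure_mono fun p hp => ⟨hp.1, not_le.1 hp.2⟩)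

lemma integral_Icc_const_sub (x y : ℝ) : ∫ s in Icc y x, (x - s) = (x - y)⁺ ^ 2 / 2 := by
  rcases le_or_gt y x with h | h
  · rw [integral_Icc_eq_integral_Ioc, ← intervalIntegral.integral_of_le h,
      intervalIntegral.integral_comp_sub_left (fun s => s), integral_id,
      posPart_eq_self.2 (sub_nonneg.2 h)]
    ring
  · rw [Icc_eq_empty h.not_ge, Measure.restrict_empty, integral_zero_measure,
      posPart_eq_zero.2 (sub_nonpos.2 h.le)]
    ring

lemma volume_triangle_eq (x y : ℝ) :
    volume ({q : ℝ × ℝ | y ≤ q.1 ∧ q.2 < x} ∩ {q | q.1 < q.2}) =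
      ENNReal.ofReal ((x - y)⁺ ^ 2 / 2) := by
  have h_eq : {q : ℝ × ℝ | y ≤ q.1 ∧ q.2 < x} ∩ {q | q.1 < q.2} =
      regionBetween id (fun _ => x) (Icc y x) := by
    ext ⟨s, t⟩
    constructor
    · rintro ⟨⟨hys, htx⟩, hst : s < t⟩; exact ⟨⟨hys, hst.le.trans htx.le⟩, hst, htx⟩
    · rintro ⟨⟨hys, -⟩, hst, htx⟩; exact ⟨⟨hys, htx⟩, hst⟩
  rw [h_eq, Measure.volume_eq_prod, volume_regionBetween_eq_integral
    continuous_id.integrableOn_Icc continuous_const.integrableOn_Icc measurableSet_Icc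
    fun s hs => hs.2]
  exact congrArg ENNReal.ofReal (integral_Icc_const_sub x y)

lemma lintegral_posPart_sub_sq (γ : Measure (ℝ × ℝ)) [SFinite γ] :
    ∫⁻ p, ENNReal.ofReal ((p.1 - p.2)⁺ ^ 2) ∂γ =
      2 * ∫⁻ q in {q : ℝ × ℝ | q.1 < q.2}, γ {p | p.2 ≤ q.1 ∧ q.2 < p.1} := by
  set S := {q : ℝ × ℝ | q.1 < q.2}
  have hS : MeasurableSet S := measurableSet_lt measurable_fst measurable_snd
  set E := {r : (ℝ × ℝ) × (ℝ × ℝ) | r.1.2 ≤ r.2.1 ∧ r.2.2 < r.1.1}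
  have hE : MeasurableSet E := (measurableSet_le measurable_fst.snd measurable_snd.fst).inter
    (measurableSet_lt measurable_snd.snd measurable_fst.fst)
  have h_slices_q : (γ.prod (volume.restrict S)) E = ∫⁻ q in S, γ {p | p.2 ≤ q.1 ∧ q.2 < p.1} :=
    Measure.prod_apply_symm hE
  have h_slices_p : (γ.prod (volume.restrict S)) E =
      ∫⁻ p, ENNReal.ofReal ((p.1 - p.2)⁺ ^ 2 / 2) ∂γ := by
    rw [Measure.prod_apply hE]
    refine lintegral_congr fun p => ?_
    rw [Measure.restrict_apply' hS]
    exact volume_triangle_eq p.1 p.2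
  rw [← h_slices_q, h_slices_p, ← lintegral_const_mul' _ _ ENNReal.ofNat_ne_top]
  refine lintegral_congr fun p => ?_
  rw [← ENNReal.ofReal_ofNat, ← ENNReal.ofReal_mul zero_le_two]
  ring_nf

lemma lintegral_sub_sq_eq_add_map_swap (γ : Measure (ℝ × ℝ)) :
    ∫⁻ p, ENNReal.ofReal ((p.1 - p.2) ^ 2) ∂γ =
      ∫⁻ p, ENNReal.ofReal ((p.1 - p.2)⁺ ^ 2) ∂γ +
        ∫⁻ p, ENNReal.ofReal ((p.1 - p.2)⁺ ^ 2) ∂γ.map Prod.swap := by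
  rw [lintegral_map (by fun_prop) measurable_swap, ← lintegral_add_left (by fun_prop)]
  refine lintegral_congr fun p => ?_
  rw [← ENNReal.ofReal_add (by positivity) (by positivity)]
  congr 1
  simp only [Prod.fst_swap, Prod.snd_swap]
  rcases le_total p.2 p.1 with h | h
  · rw [posPart_eq_self.2 (sub_nonneg.2 h), posPart_eq_zero.2 (sub_nonpos.2 h)]
    ring
  · rw [posPart_eq_zero.2 (sub_nonpos.2 h), posPart_eq_self.2 (sub_nonneg.2 h)]
    ring

noncomputable def quantileCoupling (μ ν : Measure ℝ) : Measure (ℝ × ℝ) :=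
  (volume.restrict (Ioo 0 1)).map fun u => (quantile μ u, quantile ν u)

instance (μ ν : Measure ℝ) : IsFiniteMeasure (quantileCoupling μ ν) :=
  Measure.isFiniteMeasure_map _ _

section quantileCoupling

variable (μ ν : Measure ℝ)

lemma aemeasurable_quantile_prodMk :
    AEMeasurable (fun u => (quantile μ u, quantile ν u)) (volume.restrict (Ioo 0 1)) :=
  (aemeasurable_quantile μ).prodMk (aemeasurable_quantile ν)

lemma quantileCoupling_map_fst [IsProbabilityMeasure μ] :
    (quantileCoupling μ ν).map Prod.fst = μ := by
  rw [quantileCoupling,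
    AEMeasurable.map_map_of_aemeasurable measurable_fst.aemeasurable
      (aemeasurable_quantile_prodMk μ ν)]
  exact map_quantile μ

lemma quantileCoupling_map_snd [IsProbabilityMeasure ν] :
    (quantileCoupling μ ν).map Prod.snd = ν := by
  rw [quantileCoupling,
    AEMeasurable.map_map_of_aemeasurable measurable_snd.aemeasurable
      (aemeasurable_quantile_prodMk μ ν)]
  exact map_quantile ν

lemma quantileCoupling_map_swap : (quantileCoupling μ ν).map Prod.swap = quantileCoupling ν μ := by
  rw [quantileCoupling,
    AEMeasurable.map_map_of_aemeasurable measurable_swap.aemeasurable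
      (aemeasurable_quantile_prodMk μ ν)]
  rfl

lemma quantileCoupling_apply_le [IsProbabilityMeasure μ] [IsProbabilityMeasure ν] (s t : ℝ) :
    quantileCoupling μ ν {p | p.2 ≤ s ∧ t < p.1} ≤ ν (Iic s) - μ (Iic t) := by
  rw [quantileCoupling, Measure.map_apply_of_aemeasurable (aemeasurable_quantile_prodMk μ ν)
    (measurableSet_snd_le_and_lt_fst s t), Measure.restrict_apply' measurableSet_Ioo]
  calc volume ((fun u => (quantile μ u, quantile ν u)) ⁻¹' {p | p.2 ≤ s ∧ t < p.1} ∩ Ioo 0 1)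
      ≤ volume (Ioc (cdf μ t) (cdf ν s)) := measure_mono fun u ⟨⟨hs, ht⟩, hu⟩ =>
        ⟨not_le.1 fun h => ht.not_ge ((quantile_le_iff μ hu t).2 h),
          (quantile_le_iff ν hu s).1 hs⟩
    _ = ν (Iic s) - μ (Iic t) := by
      rw [Real.volume_Ioc, ENNReal.ofReal_sub _ (cdf_nonneg μ t), ofReal_cdf, ofReal_cdf]

lemma lintegral_posPart_sub_sq_quantileCoupling_le [IsProbabilityMeasure μ] [IsProbabilityMeasure ν]
    (γ : Measure (ℝ × ℝ))
    (hfst : γ.map Prod.fst = μ) (hsnd : γ.map Prod.snd = ν) :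
    ∫⁻ p, ENNReal.ofReal ((p.1 - p.2)⁺ ^ 2) ∂quantileCoupling μ ν ≤
      ∫⁻ p, ENNReal.ofReal ((p.1 - p.2)⁺ ^ 2) ∂γ := by
  have : IsProbabilityMeasure γ := by
    subst hfst
    exact Measure.isProbabilityMeasure_of_map Prod.fst
  rw [lintegral_posPart_sub_sq, lintegral_posPart_sub_sq]
  refine mul_le_mul_right (lintegral_mono fun q => ?_) 2
  calc quantileCoupling μ ν {p | p.2 ≤ q.1 ∧ q.2 < p.1} ≤ ν (Iic q.1) - μ (Iic q.2) :=
        quantileCoupling_apply_le μ ν q.1 q.2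
    _ ≤ γ {p | p.2 ≤ q.1 ∧ q.2 < p.1} := by
        rw [← hfst, ← hsnd]
        exact map_snd_Iic_sub_map_fst_Iic_le γ q.1 q.2

lemma lintegral_sub_sq_quantileCoupling_le [IsProbabilityMeasure μ] [IsProbabilityMeasure ν]
    (γ : Measure (ℝ × ℝ))
    (hfst : γ.map Prod.fst = μ) (hsnd : γ.map Prod.snd = ν) :
    ∫⁻ p, ENNReal.ofReal ((p.1 - p.2) ^ 2) ∂quantileCoupling μ ν ≤
      ∫⁻ p, ENNReal.ofReal ((p.1 - p.2) ^ 2) ∂γ := by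
  rw [lintegral_sub_sq_eq_add_map_swap, lintegral_sub_sq_eq_add_map_swap,
    quantileCoupling_map_swap]
  exact add_le_add (lintegral_posPart_sub_sq_quantileCoupling_le μ ν γ hfst hsnd)
    (lintegral_posPart_sub_sq_quantileCoupling_le ν μ (γ.map Prod.swap)
      (Measure.fst_map_swap.trans hsnd) (Measure.snd_map_swap.trans hfst))

lemma lintegral_sub_sq_quantileCoupling [IsProbabilityMeasure μ] [IsProbabilityMeasure ν]
    (hμ2 : Integrable (fun x : ℝ => x ^ 2) μ)
    (hν2 : Integrable (fun x : ℝ => x ^ 2) ν) :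
    ∫⁻ p, ENNReal.ofReal ((p.1 - p.2) ^ 2) ∂quantileCoupling μ ν =
      ENNReal.ofReal (∫ t in Ioo 0 1, (quantile μ t - quantile ν t) ^ 2) := by
  rw [quantileCoupling, lintegral_map' (by fun_prop) (aemeasurable_quantile_prodMk μ ν)]
  exact (ofReal_integral_eq_lintegral_ofReal
    ((memLp_quantile μ hμ2).sub (memLp_quantile ν hν2)).integrable_sq
    (ae_of_all _ fun _ => sq_nonneg _)).symm

end quantileCoupling

theorem w2sq_eq_integral_quantile_diff_sq_general
    (μ ν : Measure ℝ) [IsProbabilityMeasure μ] [IsProbabilityMeasure ν]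
    (hμ2 : Integrable (fun x : ℝ => x ^ 2) μ)
    (hν2 : Integrable (fun x : ℝ => x ^ 2) ν) :
    W2sq μ ν =
      ENNReal.ofReal (∫ t in Set.Ioo (0 : ℝ) 1, (quantile μ t - quantile ν t) ^ 2) := by
  rw [← lintegral_sub_sq_quantileCoupling μ ν hμ2 hν2]
  refine le_antisymm ?_ ?_
  · exact iInf₂_le _ ⟨quantileCoupling_map_fst μ ν, quantileCoupling_map_snd μ ν⟩
  · exact le_iInf₂ fun γ hγ => lintegral_sub_sq_quantileCoupling_le μ ν γ hγ.1 hγ.2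

/-- for absolutely continuous probability measures on ℝ with finite second
moments, the squared 2-Wasserstein distance equals the integral of the squared difference
of quantile functions over (0,1). -/
theorem w2sq_eq_integral_quantile_diff_sq
    (μ ν : Measure ℝ) [IsProbabilityMeasure μ] [IsProbabilityMeasure ν]
    (hμac : μ ≪ volume) (hνac : ν ≪ volume)
    (hμ2 : Integrable (fun x : ℝ => x ^ 2) μ)
    (hν2 : Integrable (fun x : ℝ => x ^ 2) ν) :
    W2sq μ ν =
      ENNReal.ofReal (∫ t in Set.Ioo (0 : ℝ) 1, (quantile μ t - quantile ν t) ^ 2) :=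
  w2sq_eq_integral_quantile_diff_sq_general μ ν hμ2 hν2
end

section
/- For univariate Gaussian measures, the Wasserstein covariance between predictor processes μ_j = N(m_j, σ_j²) and μ_k = N(m_k, σ_k²) (with barycenters N(m̄_j, σ̄_j²), N(m̄_k, σ̄_k²)) evaluated via the tangent space at a Gaussian ν̄ = N(n̄, η̄²) equals E[(m_j − m̄_j)(m_k − m̄_k) + (σ_j − σ̄_j)(σ_k − σ̄_k)]. -/
/-! For each fixed `ω` the inner integrand is a quadratic polynomial in `x - n̄`. Under
`ν̄ = N(n̄, η̄²)` the linear term has mean zero and `(x - n̄)²` has mean `η̄²`, which cancels the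
`1 / η̄²` of the scaled tangent vectors, so the inner integral already equals the outer integrand. -/

open MeasureTheory ProbabilityTheory

lemma integral_affine_mul_affine_sub_mean {Ω : Type*} [MeasurableSpace Ω] {μ : Measure Ω}
    [IsProbabilityMeasure μ] {X : Ω → ℝ} (hX : MemLp X 2 μ) (a b c d : ℝ) :
    ∫ ω, (a * (X ω - μ[X]) + b) * (c * (X ω - μ[X]) + d) ∂μ = a * c * Var[X; μ] + b * d := by
  have hY : MemLp (fun ω => X ω - μ[X]) 2 μ := hX.sub (memLp_const _)
  have hY_int : Integrable (fun ω => X ω - μ[X]) μ := hY.integrable one_le_two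
  have hY_mean : ∫ ω, (X ω - μ[X]) ∂μ = 0 := by
    rw [integral_sub (hX.integrable one_le_two) (integrable_const _)]
    simp
  have hexpand : ∀ ω, (a * (X ω - μ[X]) + b) * (c * (X ω - μ[X]) + d) =
      a * c * (X ω - μ[X]) ^ 2 + ((a * d + b * c) * (X ω - μ[X]) + b * d) := fun ω => by ring
  have hY_sq_int : Integrable (fun ω => a * c * (X ω - μ[X]) ^ 2) μ :=
    hY.integrable_sq.const_mul _
  have hY_lin_int : Integrable (fun ω => (a * d + b * c) * (X ω - μ[X])) μ :=
    hY_int.const_mul _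
  have hY_affine_int : Integrable (fun ω => (a * d + b * c) * (X ω - μ[X]) + b * d) μ :=
    hY_lin_int.add (integrable_const _)
  simp_rw [hexpand]
  rw [integral_add hY_sq_int hY_affine_int,
    integral_add hY_lin_int (integrable_const _), integral_const_mul, integral_const_mul,
    hY_mean, variance_eq_integral hX.aemeasurable]
  simp

lemma integral_affine_mul_affine_gaussianReal {n η : ℝ} (hη : η ≠ 0) (a b c d : ℝ) :
    ∫ x, ((x - n) * a / η + b) * ((x - n) * c / η + d)
      ∂(gaussianReal n (Real.toNNReal (η ^ 2))) = b * d + a * c := by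
  have hmean : (gaussianReal n (Real.toNNReal (η ^ 2)))[id] = n := integral_id_gaussianReal
  have key := integral_affine_mul_affine_sub_mean (memLp_id_gaussianReal (μ := n)
    (v := Real.toNNReal (η ^ 2)) 2) (a / η) b (c / η) d
  rw [hmean, variance_id_gaussianReal, Real.coe_toNNReal _ (sq_nonneg η)] at key
  convert key using 1
  · congr 1 with x
    simp only [id]
    ring
  · field_simp
    ring

theorem gauss_wasserstein_covariance_general
    {Ω : Type*} [MeasurableSpace Ω] (P : Measure Ω)
    (mj mk σj σk : Ω → ℝ) (mbj mbk sbj sbk nb ηb : ℝ) (hηb : 0 < ηb) :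
    ∫ ω,
        (∫ x, ((x - nb) * (σj ω - sbj) / ηb + (mj ω - mbj)) *
            ((x - nb) * (σk ω - sbk) / ηb + (mk ω - mbk))
          ∂(gaussianReal nb (Real.toNNReal (ηb ^ 2)))) ∂P =
      ∫ ω, ((mj ω - mbj) * (mk ω - mbk) + (σj ω - sbj) * (σk ω - sbk)) ∂P :=
  integral_congr_ae <| ae_of_all _ fun _ => integral_affine_mul_affine_gaussianReal hηb.ne' _ _ _ _

/-- for univariate Gaussian predictor processes `μ_j = N(m_j, σ_j²)` and
`μ_k = N(m_k, σ_k²)` with barycenters `N(m̄_j, σ̄_j²)`, `N(m̄_k, σ̄_k²)`, the Wasserstein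
covariance evaluated via the tangent space at a Gaussian `ν̄ = N(n̄, η̄²)` equals
`E[(m_j − m̄_j)(m_k − m̄_k) + (σ_j − σ̄_j)(σ_k − σ̄_k)]`. Here
`T_{μ_j‖ν̄}(x) − x = (x − n̄)(σ_j − σ̄_j)/η̄ + (m_j − m̄_j)`. -/
theorem gauss_wasserstein_covariance
    {Ω : Type*} [MeasurableSpace Ω] (P : Measure Ω) [IsProbabilityMeasure P]
    (mj mk σj σk : Ω → ℝ) (mbj mbk sbj sbk nb ηb : ℝ) (hηb : 0 < ηb)
    (h1 : Integrable (fun ω => (mj ω - mbj) * (mk ω - mbk)) P)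
    (h2 : Integrable (fun ω => (σj ω - sbj) * (σk ω - sbk)) P) :
    ∫ ω,
        (∫ x, ((x - nb) * (σj ω - sbj) / ηb + (mj ω - mbj)) *
            ((x - nb) * (σk ω - sbk) / ηb + (mk ω - mbk))
          ∂(gaussianReal nb (Real.toNNReal (ηb ^ 2)))) ∂P =
      ∫ ω, ((mj ω - mbj) * (mk ω - mbk) + (σj ω - sbj) * (σk ω - sbk)) ∂P :=
  gauss_wasserstein_covariance_general P mj mk σj σk mbj mbk sbj sbk nb ηb hηb
end
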